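/- arXiv:1807.11406 — 6 statements merged into one kernel-verified Lean document; each statement's English description precedes it below -/
import Mathlib

section
/- Let H1 be a real separable Hilbert space, H2 a real Hilbert space of real-valued functions on a Borel set X, and A : H1 → H2 a bounded linear operator such that there exists c > 0 with |(Af)(x)| ≤ c‖f‖_{H1} for all x ∈ X and all f ∈ H1. Let φ_x ∈ H1 be the Riesz representer of f ↦ (Af)(x). Then the range Im(A), equipped with ‖g‖_{H_K} := min{‖w‖_{H1} : w ∈ H1 and g(x) = ⟨w, φ_x⟩_{H1} for all x ∈ X} (this minimum is attained), is a Hilbert space of functions on X in which every evaluation functional g ↦ g(x) is continuous; it is a reproducing kernel Hilbert space with kernel K(x,r) := ⟨φ_x, φ_r⟩_{H1}, i.e. K_x := K(x,·) = Aφ_x belongs to Im(A) and g(x) = ⟨g, K_x⟩_{H_K} for every g ∈ Im(A) and x ∈ X. -/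
/-! Since `e` is injective, `w` represents `g` exactly when `A w = g`, so the representers of
`g ∈ Im(A)` form a coset of the closed subspace `ker A`. By Pythagoras, the element of minimal
norm in such a coset is its unique element in `(ker A)ᗮ`, which exists by orthogonal projection.
The reproducing property follows because `φ x` and the minimal representer `w_x` of `A (φ x)`
differ by an element of `ker A`, which is orthogonal to the minimal representer `w` of `g`:
`g(x) = ⟪w, φ x⟫ = ⟪w, w_x⟫`. -/

namespace Submodule

variable {𝕜 E : Type*} [RCLike 𝕜] [NormedAddCommGroup E] [InnerProductSpace 𝕜 E]
  {K : Submodule 𝕜 E}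

theorem norm_le_of_mem_orthogonal_of_sub_mem {w w' : E} (hw : w ∈ Kᗮ) (hw' : w' - w ∈ K) :
    ‖w‖ ≤ ‖w'‖ := by
  have hpyth : ‖w'‖ * ‖w'‖ = ‖w‖ * ‖w‖ + ‖w' - w‖ * ‖w' - w‖ := by
    simpa using norm_add_sq_eq_norm_sq_add_norm_sq_of_inner_eq_zero w (w' - w)
      (K.inner_left_of_mem_orthogonal hw' hw)
  nlinarith [norm_nonneg w, norm_nonneg w']

theorem mem_orthogonal_iff_forall_sub_mem_norm_le [K.HasOrthogonalProjection] {w : E} :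
    w ∈ Kᗮ ↔ ∀ w', w' - w ∈ K → ‖w‖ ≤ ‖w'‖ := by
  refine ⟨fun hw _ => norm_le_of_mem_orthogonal_of_sub_mem hw, fun hmin => ?_⟩
  have hle := hmin _ (by simp [K.starProjection_apply_mem w] :
    w - K.starProjection w - w ∈ K)
  have hpyth : ‖w‖ ^ 2 = ‖K.starProjection w‖ ^ 2 + ‖w - K.starProjection w‖ ^ 2 := by
    simpa [starProjection_orthogonal_val] using norm_sq_eq_add_norm_sq_starProjection w K
  have hproj : ‖K.starProjection w‖ = 0 := by
    nlinarith [norm_nonneg w, norm_nonneg (K.starProjection w)]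
  exact (K.starProjection_apply_eq_zero_iff).mp (norm_eq_zero.mp hproj)

end Submodule

namespace LinearMap

variable {𝕜 E F : Type*} [RCLike 𝕜] [NormedAddCommGroup E] [InnerProductSpace 𝕜 E]
  [AddCommGroup F] [Module 𝕜 F] (T : E →ₗ[𝕜] F)

theorem mem_orthogonal_ker_iff_forall_apply_eq_norm_le [(ker T).HasOrthogonalProjection]
    {w : E} : w ∈ (ker T)ᗮ ↔ ∀ w', T w' = T w → ‖w‖ ≤ ‖w'‖ := by
  simp_rw [← sub_mem_ker_iff]
  exact Submodule.mem_orthogonal_iff_forall_sub_mem_norm_le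

theorem exists_mem_orthogonal_ker_apply_eq [(ker T).HasOrthogonalProjection] (f : E) :
    ∃ w ∈ (ker T)ᗮ, T w = T f :=
  ⟨f - (ker T).starProjection f, Submodule.sub_starProjection_mem_orthogonal f,
    sub_mem_ker_iff.mp (by simp [(ker T).starProjection_apply_mem f])⟩

theorem inner_eq_of_mem_orthogonal_ker {w u v : E} (hw : w ∈ (ker T)ᗮ) (h : T u = T v) :
    inner 𝕜 w u = inner 𝕜 w v := by
  rw [← sub_eq_zero, ← inner_sub_right]
  exact Submodule.inner_left_of_mem_orthogonal (sub_mem_ker_iff.mpr h) hw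

end LinearMap

open RealInnerProductSpace

theorem stmt0_general
    {H1 H2 X : Type*}
    [NormedAddCommGroup H1] [InnerProductSpace ℝ H1] [CompleteSpace H1]
    [NormedAddCommGroup H2] [InnerProductSpace ℝ H2]
    (e : H2 →ₗ[ℝ] X → ℝ) (he : Function.Injective e)
    (A : H1 →L[ℝ] H2)
    (φ : X → H1) (hφ : ∀ (x : X) (f : H1), e (A f) x = ⟪f, φ x⟫) :
    -- the minimum defining the `H_K`-norm is attained: every `g ∈ Im(A)` has a
    -- minimal-norm representer
    (∀ g ∈ Set.range A, ∃ w : H1,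
        (∀ x, e g x = ⟪w, φ x⟫) ∧
        (∀ w' : H1, (∀ x, e g x = ⟪w', φ x⟫) → ‖w‖ ≤ ‖w'‖)) ∧
    -- the kernel sections `K_x = A (φ x)` belong to `Im(A)` and `K(x,r) = ⟪φ x, φ r⟫`
    (∀ x : X, A (φ x) ∈ Set.range A ∧ ∀ r : X, e (A (φ x)) r = ⟪φ x, φ r⟫) ∧
    -- reproducing property: `g(x) = ⟪g, K_x⟫_{H_K}`, the `H_K`-inner product being the
    -- `H1`-inner product of the minimal-norm representers
    (∀ g ∈ Set.range A, ∀ (x : X) (w wx : H1),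
        ((∀ x', e g x' = ⟪w, φ x'⟫) ∧
          ∀ w' : H1, (∀ x', e g x' = ⟪w', φ x'⟫) → ‖w‖ ≤ ‖w'‖) →
        ((∀ x', e (A (φ x)) x' = ⟪wx, φ x'⟫) ∧
          ∀ w' : H1, (∀ x', e (A (φ x)) x' = ⟪w', φ x'⟫) → ‖wx‖ ≤ ‖w'‖) →
        e g x = ⟪w, wx⟫) ∧
    -- every evaluation functional is continuous with respect to the `H_K`-norm
    (∀ x : X, ∃ C : ℝ, 0 ≤ C ∧ ∀ g ∈ Set.range A, ∀ w : H1,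
        ((∀ x', e g x' = ⟪w, φ x'⟫) ∧
          ∀ w' : H1, (∀ x', e g x' = ⟪w', φ x'⟫) → ‖w‖ ≤ ‖w'‖) →
        |e g x| ≤ C * ‖w‖) ∧
    -- `w ↦ A w` maps `Ker(A)ᗮ` isometrically onto `Im(A)` with the `H_K`-norm, so that
    -- `(Im(A), ‖·‖_{H_K})` inherits the complete Hilbert space structure of `Ker(A)ᗮ`
    (∀ w ∈ (LinearMap.ker (A : H1 →ₗ[ℝ] H2))ᗮ,
        (∀ x, e (A w) x = ⟪w, φ x⟫) ∧
        ∀ w' : H1, (∀ x, e (A w) x = ⟪w', φ x⟫) → ‖w‖ ≤ ‖w'‖) := by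
  have : CompleteSpace (LinearMap.ker (A : H1 →ₗ[ℝ] H2)) := A.isClosed_ker.completeSpace_coe
  have hrep (g : H2) (w : H1) : (∀ x, e g x = ⟪w, φ x⟫) ↔ g = A w :=
    ⟨fun h => he (funext fun x => (h x).trans (hφ x w).symm), fun h x => h ▸ hφ x w⟩
  have hmin (w : H1) :=
    (A : H1 →ₗ[ℝ] H2).mem_orthogonal_ker_iff_forall_apply_eq_norm_le (w := w)
  refine ⟨?_, fun x => ⟨⟨φ x, rfl⟩, fun r => hφ r (φ x)⟩, ?_, ?_, ?_⟩
  · rintro _ ⟨f, rfl⟩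
    obtain ⟨w, hw, hAw⟩ := (A : H1 →ₗ[ℝ] H2).exists_mem_orthogonal_ker_apply_eq f
    refine ⟨w, (hrep _ _).mpr hAw.symm, fun w' hw' => (hmin w).mp hw w' ?_⟩
    exact ((hrep _ _).mp hw').symm.trans hAw.symm
  · simp only [hrep]
    rintro g - x w wx ⟨rfl, hw⟩ ⟨hwx, -⟩
    rw [hφ]
    exact (A : H1 →ₗ[ℝ] H2).inner_eq_of_mem_orthogonal_ker
      ((hmin w).mpr fun w' h => hw w' h.symm) hwx
  · refine fun x => ⟨‖φ x‖, norm_nonneg _, ?_⟩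
    rintro g - w ⟨hw, -⟩
    rw [hw x, mul_comm]
    exact abs_real_inner_le_norm w (φ x)
  · refine fun w hw => ⟨fun x => hφ x w, fun w' hw' => (hmin w).mp hw w' ?_⟩
    exact ((hrep _ _).mp hw').symm

/-- **The range of `A` is a reproducing kernel Hilbert space.**
Let `H1` be a real separable Hilbert space, `H2` a real Hilbert space of real-valued functions
on a Borel set `X` (encoded by an injective linear evaluation map `e : H2 →ₗ[ℝ] X → ℝ`),
and `A : H1 → H2` bounded linear with `|(Af)(x)| ≤ c‖f‖` for all `x, f`.  Let `φ x` be the Riesz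
representer of `f ↦ (Af)(x)`.  Then `Im(A)`, equipped with the norm
`‖g‖_{H_K} = min {‖w‖ : (∀ x, g(x) = ⟪w, φ x⟫)}` (the minimum being attained), is a Hilbert
space of functions on `X` with continuous evaluation functionals, and it is a RKHS with kernel
`K(x,r) = ⟪φ x, φ r⟫`: `K_x = A (φ x) ∈ Im(A)` and `g(x) = ⟪g, K_x⟫_{H_K}` for all `g ∈ Im(A)`
(the `H_K`-inner product being computed through the minimal-norm representers; completeness of
`H_K` is expressed by the fact that `w ↦ A w` is an isometry from the Hilbert space `Ker(A)ᗮ`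
onto `Im(A)` for the `H_K`-norm). -/
theorem stmt0
    {H1 H2 X : Type*}
    [NormedAddCommGroup H1] [InnerProductSpace ℝ H1] [CompleteSpace H1]
    [TopologicalSpace.SeparableSpace H1]
    [NormedAddCommGroup H2] [InnerProductSpace ℝ H2] [CompleteSpace H2]
    [MeasurableSpace X]
    (e : H2 →ₗ[ℝ] X → ℝ) (he : Function.Injective e)
    (A : H1 →L[ℝ] H2) (c : ℝ) (hc : 0 < c)
    (hbound : ∀ (x : X) (f : H1), |e (A f) x| ≤ c * ‖f‖)
    (φ : X → H1) (hφ : ∀ (x : X) (f : H1), e (A f) x = ⟪f, φ x⟫) :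
    -- the minimum defining the `H_K`-norm is attained: every `g ∈ Im(A)` has a
    -- minimal-norm representer
    (∀ g ∈ Set.range A, ∃ w : H1,
        (∀ x, e g x = ⟪w, φ x⟫) ∧
        (∀ w' : H1, (∀ x, e g x = ⟪w', φ x⟫) → ‖w‖ ≤ ‖w'‖)) ∧
    -- the kernel sections `K_x = A (φ x)` belong to `Im(A)` and `K(x,r) = ⟪φ x, φ r⟫`
    (∀ x : X, A (φ x) ∈ Set.range A ∧ ∀ r : X, e (A (φ x)) r = ⟪φ x, φ r⟫) ∧
    -- reproducing property: `g(x) = ⟪g, K_x⟫_{H_K}`, the `H_K`-inner product being the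
    -- `H1`-inner product of the minimal-norm representers
    (∀ g ∈ Set.range A, ∀ (x : X) (w wx : H1),
        ((∀ x', e g x' = ⟪w, φ x'⟫) ∧
          ∀ w' : H1, (∀ x', e g x' = ⟪w', φ x'⟫) → ‖w‖ ≤ ‖w'‖) →
        ((∀ x', e (A (φ x)) x' = ⟪wx, φ x'⟫) ∧
          ∀ w' : H1, (∀ x', e (A (φ x)) x' = ⟪w', φ x'⟫) → ‖wx‖ ≤ ‖w'‖) →
        e g x = ⟪w, wx⟫) ∧
    -- every evaluation functional is continuous with respect to the `H_K`-norm
    (∀ x : X, ∃ C : ℝ, 0 ≤ C ∧ ∀ g ∈ Set.range A, ∀ w : H1,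
        ((∀ x', e g x' = ⟪w, φ x'⟫) ∧
          ∀ w' : H1, (∀ x', e g x' = ⟪w', φ x'⟫) → ‖w‖ ≤ ‖w'‖) →
        |e g x| ≤ C * ‖w‖) ∧
    -- `w ↦ A w` maps `Ker(A)ᗮ` isometrically onto `Im(A)` with the `H_K`-norm, so that
    -- `(Im(A), ‖·‖_{H_K})` inherits the complete Hilbert space structure of `Ker(A)ᗮ`
    (∀ w ∈ (LinearMap.ker (A : H1 →ₗ[ℝ] H2))ᗮ,
        (∀ x, e (A w) x = ⟪w, φ x⟫) ∧
        ∀ w' : H1, (∀ x, e (A w) x = ⟪w', φ x⟫) → ‖w‖ ≤ ‖w'‖) :=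
  stmt0_general e he A φ hφ
end

section
/- Let ψ : [0,∞) → [0,∞) be continuous, convex and strictly increasing, and let λ > 0. Let ĝ_{R_y,λ} be the unique minimizer over H_K = Im(A) of g ↦ R_y(g) + λψ(‖g‖_{H_K}), and let f̂_{R_y,λ} be the unique minimizer over H1 of f ↦ R_y(Af) + λψ(‖f‖_{H1}). Then f̂_{R_y,λ} = Ã^{-1} ĝ_{R_y,λ}; equivalently, A f̂_{R_y,λ} = ĝ_{R_y,λ} and f̂_{R_y,λ} ∈ Ker(A)^⊥. -/
/-!
Every `g ∈ Im(A)` has a preimage in `Ker(A)ᗮ`, and by Pythagoras it is a preimage of minimal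
norm, so `‖A w‖_{H_K} = ‖w‖` for `w ∈ Ker(A)ᗮ`: along `Ã` the two objectives coincide.
Replacing `f̂` by its component in `Ker(A)ᗮ` keeps `A f̂` and does not increase `‖f̂‖`, so by
uniqueness `f̂ ∈ Ker(A)ᗮ`; then `A f̂` minimizes the `H_K` objective, hence equals `ĝ`.
-/

/-- The `H_K`-norm of `g ∈ Im(A)`: the minimal `H1`-norm of a preimage of `g` under `A`. -/
noncomputable def KNorm {H1 H2 : Type*}
    [NormedAddCommGroup H1] [InnerProductSpace ℝ H1]
    [NormedAddCommGroup H2] [InnerProductSpace ℝ H2]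
    (A : H1 →L[ℝ] H2) (g : H2) : ℝ :=
  sInf {r : ℝ | ∃ w : H1, A w = g ∧ ‖w‖ = r}

theorem Submodule.norm_le_norm_add_of_mem_orthogonal {E : Type*} [NormedAddCommGroup E]
    [InnerProductSpace ℝ E] {K : Submodule ℝ E} {k w : E} (hk : k ∈ K) (hw : w ∈ Kᗮ) :
    ‖w‖ ≤ ‖k + w‖ := by
  have h := norm_add_sq_eq_norm_sq_add_norm_sq_real (K.inner_right_of_mem_orthogonal hk hw)
  rw [mul_self_le_mul_self_iff (norm_nonneg _) (norm_nonneg _), h]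
  exact le_add_of_nonneg_left (mul_self_nonneg _)

section KNorm

variable {H1 H2 : Type*} [NormedAddCommGroup H1] [InnerProductSpace ℝ H1]
  [NormedAddCommGroup H2] [InnerProductSpace ℝ H2] (A : H1 →L[ℝ] H2)

theorem KNorm_apply_le (f : H1) : KNorm A (A f) ≤ ‖f‖ :=
  csInf_le ⟨0, by rintro r ⟨u, -, rfl⟩; exact norm_nonneg u⟩ ⟨f, rfl, rfl⟩

theorem norm_le_of_mem_orthogonal_ker {w u : H1}
    (hw : w ∈ (LinearMap.ker (A : H1 →ₗ[ℝ] H2))ᗮ) (hu : A u = A w) : ‖w‖ ≤ ‖u‖ := by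
  have hk : u - w ∈ LinearMap.ker (A : H1 →ₗ[ℝ] H2) := by simp [hu]
  simpa using Submodule.norm_le_norm_add_of_mem_orthogonal hk hw

theorem KNorm_apply_of_mem_orthogonal_ker {w : H1}
    (hw : w ∈ (LinearMap.ker (A : H1 →ₗ[ℝ] H2))ᗮ) : KNorm A (A w) = ‖w‖ :=
  le_antisymm (KNorm_apply_le A w) <| le_csInf ⟨‖w‖, w, rfl, rfl⟩ <| by
    rintro r ⟨u, hu, rfl⟩
    exact norm_le_of_mem_orthogonal_ker A hw hu

theorem exists_mem_orthogonal_ker_apply_eq [CompleteSpace H1] (f : H1) :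
    ∃ w ∈ (LinearMap.ker (A : H1 →ₗ[ℝ] H2))ᗮ, A w = A f := by
  have : CompleteSpace (LinearMap.ker (A : H1 →ₗ[ℝ] H2)) := A.isClosed_ker.completeSpace_coe
  obtain ⟨k, hk, w, hw, rfl⟩ := Submodule.exists_add_mem_mem_orthogonal
    (K := LinearMap.ker (A : H1 →ₗ[ℝ] H2)) f
  exact ⟨w, hw, by simp_all⟩

end KNorm

theorem stmt2_general
    {H1 H2 : Type*}
    [NormedAddCommGroup H1] [InnerProductSpace ℝ H1] [CompleteSpace H1]
    [NormedAddCommGroup H2] [InnerProductSpace ℝ H2]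
    (A : H1 →L[ℝ] H2)
    (R : H2 → ℝ)
    -- the penalty function ψ : [0,∞) → [0,∞), continuous, convex, strictly increasing
    (ψ : ℝ → ℝ)
    (hψmono : StrictMonoOn ψ (Set.Ici 0))
    (lam : ℝ) (hlam : 0 < lam)
    -- `ghat` is the unique minimizer of `g ↦ R_y(g) + λ ψ(‖g‖_{H_K})` over `H_K = Im(A)`
    (ghat : H2)
    (hghat_uniq : ∀ g ∈ Set.range A,
      (∀ g' ∈ Set.range A, R g + lam * ψ (KNorm A g) ≤ R g' + lam * ψ (KNorm A g')) →
      g = ghat)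
    -- `fhat` is the unique minimizer of `f ↦ R_y(A f) + λ ψ(‖f‖_{H1})` over `H1`
    (fhat : H1)
    (hfhat_min : ∀ f : H1, R (A fhat) + lam * ψ ‖fhat‖ ≤ R (A f) + lam * ψ ‖f‖)
    (hfhat_uniq : ∀ f : H1,
      (∀ f' : H1, R (A f) + lam * ψ ‖f‖ ≤ R (A f') + lam * ψ ‖f'‖) → f = fhat) :
    A fhat = ghat ∧ fhat ∈ (LinearMap.ker (A : H1 →ₗ[ℝ] H2))ᗮ := by
  have hfhat_orth : fhat ∈ (LinearMap.ker (A : H1 →ₗ[ℝ] H2))ᗮ := by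
    obtain ⟨w, hw, hAw⟩ := exists_mem_orthogonal_ker_apply_eq A fhat
    have hψw : ψ ‖w‖ ≤ ψ ‖fhat‖ := hψmono.monotoneOn (norm_nonneg w) (norm_nonneg fhat)
      (norm_le_of_mem_orthogonal_ker A hw hAw.symm)
    suffices w = fhat from this ▸ hw
    refine hfhat_uniq w fun f' => le_trans ?_ (hfhat_min f')
    rw [hAw]
    gcongr
  refine ⟨hghat_uniq _ ⟨fhat, rfl⟩ ?_, hfhat_orth⟩
  rintro _ ⟨f, rfl⟩
  obtain ⟨w, hw, hAw⟩ := exists_mem_orthogonal_ker_apply_eq A f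
  rw [← hAw, KNorm_apply_of_mem_orthogonal_ker A hfhat_orth, KNorm_apply_of_mem_orthogonal_ker A hw]
  exact hfhat_min w

/-- **Correspondence between Tikhonov regularized solutions.**
Let `ψ : [0,∞) → [0,∞)` be continuous, convex and strictly increasing and `λ > 0`.  If
`ĝ_{R_y,λ}` is the unique minimizer over `H_K = Im(A)` of `g ↦ R_y(g) + λ ψ(‖g‖_{H_K})` and
`f̂_{R_y,λ}` is the unique minimizer over `H1` of `f ↦ R_y(A f) + λ ψ(‖f‖_{H1})`, then
`f̂_{R_y,λ} = Ã⁻¹ ĝ_{R_y,λ}`, i.e. `A f̂_{R_y,λ} = ĝ_{R_y,λ}` and `f̂_{R_y,λ} ∈ Ker(A)ᗮ`. -/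
theorem stmt2
    {H1 H2 : Type*}
    [NormedAddCommGroup H1] [InnerProductSpace ℝ H1] [CompleteSpace H1]
    [TopologicalSpace.SeparableSpace H1]
    [NormedAddCommGroup H2] [InnerProductSpace ℝ H2] [CompleteSpace H2]
    (A : H1 →L[ℝ] H2)
    (R : H2 → ℝ) (y : H2)
    (hRnonneg : ∀ g, 0 ≤ R g)
    (hRzero : ∀ g, R g = 0 ↔ g = y)
    (hcond :
      (LowerSemicontinuous R ∧ StrictConvexOn ℝ Set.univ R ∧
        (∀ M : ℝ, ∃ r : ℝ, ∀ g : H2, r ≤ ‖g‖ → M ≤ R g) ∧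
        IsClosed (Set.range A)) ∨
      (LowerSemicontinuous (fun f : H1 => R (A f)) ∧
        StrictConvexOn ℝ Set.univ (fun f : H1 => R (A f)) ∧
        (∀ M : ℝ, ∃ r : ℝ, ∀ f : H1, r ≤ ‖f‖ → M ≤ R (A f))))
    -- the penalty function ψ : [0,∞) → [0,∞), continuous, convex, strictly increasing
    (ψ : ℝ → ℝ)
    (hψcont : ContinuousOn ψ (Set.Ici 0))
    (hψconv : ConvexOn ℝ (Set.Ici 0) ψ)
    (hψmono : StrictMonoOn ψ (Set.Ici 0))
    (hψnonneg : ∀ t ∈ Set.Ici (0 : ℝ), 0 ≤ ψ t)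
    (lam : ℝ) (hlam : 0 < lam)
    -- `ghat` is the unique minimizer of `g ↦ R_y(g) + λ ψ(‖g‖_{H_K})` over `H_K = Im(A)`
    (ghat : H2) (hghat_mem : ghat ∈ Set.range A)
    (hghat_min : ∀ g ∈ Set.range A,
      R ghat + lam * ψ (KNorm A ghat) ≤ R g + lam * ψ (KNorm A g))
    (hghat_uniq : ∀ g ∈ Set.range A,
      (∀ g' ∈ Set.range A, R g + lam * ψ (KNorm A g) ≤ R g' + lam * ψ (KNorm A g')) →
      g = ghat)
    -- `fhat` is the unique minimizer of `f ↦ R_y(A f) + λ ψ(‖f‖_{H1})` over `H1`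
    (fhat : H1)
    (hfhat_min : ∀ f : H1, R (A fhat) + lam * ψ ‖fhat‖ ≤ R (A f) + lam * ψ ‖f‖)
    (hfhat_uniq : ∀ f : H1,
      (∀ f' : H1, R (A f) + lam * ψ ‖f‖ ≤ R (A f') + lam * ψ ‖f'‖) → f = fhat) :
    A fhat = ghat ∧ fhat ∈ (LinearMap.ker (A : H1 →ₗ[ℝ] H2))ᗮ :=
  stmt2_general A R ψ hψmono lam hlam ghat hghat_uniq fhat hfhat_min hfhat_uniq
end

section
/- Let Z_n = {(x_1,y_1),…,(x_n,y_n)} be a finite set of samples with x_i ∈ X, y_i ∈ ℝ, and define the empirical functional R_{Z_n}(g) = (1/n) Σ_{i=1}^n V(y_i, g(x_i)), where V : Y × ℝ → [0,∞) is such that V(y_i, ·) is lower semicontinuous, strictly convex and coercive for each i. Let ĝ^{(n)}_R be the minimizer of R_{Z_n} over H_K, let (f̂^{(n)}_R)† be the minimum-norm minimizer of f ↦ R_{Z_n}(Af) over H1, and for λ > 0 let ĝ^{(n)}_{R,λ} and f̂^{(n)}_{R,λ} be the minimizers of the corresponding functionals penalized by λψ(‖·‖_{H_K}) and λψ(‖·‖_{H1})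 respectively, where ψ : [0,∞) → [0,∞) is continuous, convex and strictly increasing. Then (f̂^{(n)}_R)† = Ã^{-1} ĝ^{(n)}_R and f̂^{(n)}_{R,λ} = Ã^{-1} ĝ^{(n)}_{R,λ}. -/
/-!
Write `f = z + y` with `y ∈ Ker A` and `z ∈ (Ker A)ᗮ`. Then `A f = A z` and, by Pythagoras,
`‖z‖ ≤ ‖f‖` with equality only if `f = z`. Hence a minimum-norm minimizer of a risk `R ∘ A`, and a
minimizer of `R ∘ A + λψ(‖·‖)` with `ψ` strictly increasing, both lie in `(Ker A)ᗮ`. On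
`(Ker A)ᗮ` the map `A` is isometric from `H1` onto `(Im A, ‖·‖_{H_K})`, so these minimizers
are carried by `A` to the corresponding minimizers over `H_K`.
-/

open RealInnerProductSpace

section OrthogonalKernel

variable {𝕜 E F : Type*} [RCLike 𝕜] [NormedAddCommGroup E] [InnerProductSpace 𝕜 E]
  [NormedAddCommGroup F] [NormedSpace 𝕜 F] {A : E →L[𝕜] F} {z w : E}

theorem norm_mul_self_eq_of_mem_orthogonal_ker (hz : z ∈ (LinearMap.ker (A : E →ₗ[𝕜] F))ᗮ)
    (hw : A w = A z) : ‖w‖ * ‖w‖ = ‖z‖ * ‖z‖ + ‖w - z‖ * ‖w - z‖ := by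
  have hker : w - z ∈ LinearMap.ker (A : E →ₗ[𝕜] F) := by simp [hw]
  simpa using norm_add_sq_eq_norm_sq_add_norm_sq_of_inner_eq_zero z (w - z)
    (Submodule.inner_left_of_mem_orthogonal hker hz)

theorem norm_le_of_mem_orthogonal_ker_s3 (hz : z ∈ (LinearMap.ker (A : E →ₗ[𝕜] F))ᗮ)
    (hw : A w = A z) : ‖z‖ ≤ ‖w‖ := by
  have := norm_mul_self_eq_of_mem_orthogonal_ker hz hw
  nlinarith [norm_nonneg w, norm_nonneg z, mul_self_nonneg ‖w - z‖]

theorem eq_of_mem_orthogonal_ker_of_norm_le (hz : z ∈ (LinearMap.ker (A : E →ₗ[𝕜] F))ᗮ)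
    (hw : A w = A z) (hle : ‖w‖ ≤ ‖z‖) : w = z := by
  have := norm_mul_self_eq_of_mem_orthogonal_ker hz hw
  have : ‖w - z‖ = 0 := by nlinarith [norm_nonneg w, norm_nonneg z, norm_nonneg (w - z)]
  rwa [norm_eq_zero, sub_eq_zero] at this

theorem norm_lt_of_mem_orthogonal_ker (hz : z ∈ (LinearMap.ker (A : E →ₗ[𝕜] F))ᗮ)
    (hw : A w = A z) (hne : w ≠ z) : ‖z‖ < ‖w‖ :=
  lt_of_not_ge fun hle => hne (eq_of_mem_orthogonal_ker_of_norm_le hz hw hle)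

theorem exists_mem_orthogonal_ker_map_eq [CompleteSpace E] (A : E →L[𝕜] F) (f : E) :
    ∃ z ∈ (LinearMap.ker (A : E →ₗ[𝕜] F))ᗮ, A z = A f := by
  have : CompleteSpace (LinearMap.ker (A : E →ₗ[𝕜] F)) := A.isClosed_ker.completeSpace_coe
  obtain ⟨y, hy, z, hz, rfl⟩ := (LinearMap.ker (A : E →ₗ[𝕜] F)).exists_add_mem_mem_orthogonal f
  exact ⟨z, hz, by simpa using hy⟩

end OrthogonalKernel

section Minimizers

variable {E F : Type*} [NormedAddCommGroup E] [InnerProductSpace ℝ E] [CompleteSpace E]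
  [NormedAddCommGroup F] [NormedSpace ℝ F] (A : E →L[ℝ] F) (R : F → ℝ) {f₀ : E}

theorem mem_orthogonal_ker_of_minNorm_minimizer (hmin : ∀ f, R (A f₀) ≤ R (A f))
    (hnorm : ∀ f, (∀ f', R (A f) ≤ R (A f')) → ‖f₀‖ ≤ ‖f‖) :
    f₀ ∈ (LinearMap.ker (A : E →ₗ[ℝ] F))ᗮ := by
  obtain ⟨z, hz, hAz⟩ := exists_mem_orthogonal_ker_map_eq A f₀
  have hzmin : ∀ f', R (A z) ≤ R (A f') := hAz ▸ hmin
  rwa [eq_of_mem_orthogonal_ker_of_norm_le hz hAz.symm (hnorm z hzmin)]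

theorem mem_orthogonal_ker_of_penalized_minimizer {Φ : ℝ → ℝ} (hΦ : StrictMonoOn Φ (Set.Ici 0))
    (hmin : ∀ f, R (A f₀) + Φ ‖f₀‖ ≤ R (A f) + Φ ‖f‖) :
    f₀ ∈ (LinearMap.ker (A : E →ₗ[ℝ] F))ᗮ := by
  obtain ⟨z, hz, hAz⟩ := exists_mem_orthogonal_ker_map_eq A f₀
  by_contra hf₀
  have hlt : Φ ‖z‖ < Φ ‖f₀‖ := hΦ (norm_nonneg z) (norm_nonneg f₀)
    (norm_lt_of_mem_orthogonal_ker hz hAz.symm fun h => hf₀ (h ▸ hz))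
  have := hmin z
  rw [hAz] at this
  linarith

end Minimizers

section KNorm

variable {E F : Type*} [NormedAddCommGroup E] [InnerProductSpace ℝ E]
  [NormedAddCommGroup F] [InnerProductSpace ℝ F] {A : E →L[ℝ] F}

theorem KNorm_map_of_mem_orthogonal_ker {z : E} (hz : z ∈ (LinearMap.ker (A : E →ₗ[ℝ] F))ᗮ) :
    KNorm A (A z) = ‖z‖ := by
  have hlower : ∀ r ∈ {r : ℝ | ∃ w : E, A w = A z ∧ ‖w‖ = r}, ‖z‖ ≤ r := by
    rintro r ⟨w, hw, rfl⟩
    exact norm_le_of_mem_orthogonal_ker_s3 hz hw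
  exact le_antisymm (csInf_le ⟨‖z‖, hlower⟩ ⟨z, rfl, rfl⟩) (le_csInf ⟨‖z‖, z, rfl, rfl⟩ hlower)

theorem map_minimizer_of_mem_orthogonal_ker [CompleteSpace E] {R : F → ℝ} {Φ : ℝ → ℝ} {f₀ : E}
    (hf₀ : f₀ ∈ (LinearMap.ker (A : E →ₗ[ℝ] F))ᗮ)
    (hmin : ∀ f, R (A f₀) + Φ ‖f₀‖ ≤ R (A f) + Φ ‖f‖) :
    ∀ g ∈ Set.range A, R (A f₀) + Φ (KNorm A (A f₀)) ≤ R g + Φ (KNorm A g) := by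
  rintro _ ⟨f, rfl⟩
  obtain ⟨z, hz, hAz⟩ := exists_mem_orthogonal_ker_map_eq A f
  rw [← hAz, KNorm_map_of_mem_orthogonal_ker hf₀, KNorm_map_of_mem_orthogonal_ker hz]
  exact hmin z

end KNorm

theorem stmt3_general
    {H1 H2 X : Type*}
    [NormedAddCommGroup H1] [InnerProductSpace ℝ H1] [CompleteSpace H1]
    [NormedAddCommGroup H2] [InnerProductSpace ℝ H2]
    -- `H2` is a space of functions on `X`, with evaluation `e`
    (e : H2 →ₗ[ℝ] X → ℝ)
    (A : H1 →L[ℝ] H2)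
    -- the samples
    (n : ℕ) (x : Fin n → X) (yv : Fin n → ℝ)
    -- the loss function
    (V : ℝ → ℝ → ℝ)
    -- the penalty
    (ψ : ℝ → ℝ)
    (hψmono : StrictMonoOn ψ (Set.Ici 0))
    (lam : ℝ) (hlam : 0 < lam)
    -- `ghat` minimizes the empirical risk over `H_K = Im(A)` (unique minimizer)
    (ghat : H2)
    (hghat_uniq : ∀ g ∈ Set.range A,
      (∀ g' ∈ Set.range A,
        (n : ℝ)⁻¹ * ∑ i, V (yv i) (e g (x i)) ≤ (n : ℝ)⁻¹ * ∑ i, V (yv i) (e g' (x i))) →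
      g = ghat)
    -- `fdag` is the minimum-norm minimizer of the empirical risk composed with `A`
    (fdag : H1)
    (hfdag_min : ∀ f : H1,
      (n : ℝ)⁻¹ * ∑ i, V (yv i) (e (A fdag) (x i)) ≤ (n : ℝ)⁻¹ * ∑ i, V (yv i) (e (A f) (x i)))
    (hfdag_norm : ∀ f : H1,
      (∀ f' : H1,
        (n : ℝ)⁻¹ * ∑ i, V (yv i) (e (A f) (x i))
          ≤ (n : ℝ)⁻¹ * ∑ i, V (yv i) (e (A f') (x i))) →
      ‖fdag‖ ≤ ‖f‖)
    -- `ghatl` is the unique minimizer of the penalized empirical risk over `H_K = Im(A)`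
    (ghatl : H2)
    (hghatl_uniq : ∀ g ∈ Set.range A,
      (∀ g' ∈ Set.range A,
        (n : ℝ)⁻¹ * ∑ i, V (yv i) (e g (x i)) + lam * ψ (KNorm A g)
          ≤ (n : ℝ)⁻¹ * ∑ i, V (yv i) (e g' (x i)) + lam * ψ (KNorm A g')) →
      g = ghatl)
    -- `fhatl` is the unique minimizer of the penalized empirical risk over `H1`
    (fhatl : H1)
    (hfhatl_min : ∀ f : H1,
      (n : ℝ)⁻¹ * ∑ i, V (yv i) (e (A fhatl) (x i)) + lam * ψ ‖fhatl‖
        ≤ (n : ℝ)⁻¹ * ∑ i, V (yv i) (e (A f) (x i)) + lam * ψ ‖f‖) :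
    (A fdag = ghat ∧ fdag ∈ (LinearMap.ker (A : H1 →ₗ[ℝ] H2))ᗮ) ∧
    (A fhatl = ghatl ∧ fhatl ∈ (LinearMap.ker (A : H1 →ₗ[ℝ] H2))ᗮ) := by
  let R : H2 → ℝ := fun g => (n : ℝ)⁻¹ * ∑ i, V (yv i) (e g (x i))
  have hfdag : fdag ∈ (LinearMap.ker (A : H1 →ₗ[ℝ] H2))ᗮ :=
    mem_orthogonal_ker_of_minNorm_minimizer A R hfdag_min hfdag_norm
  have hpenalty_strictMono : StrictMonoOn (fun t => lam * ψ t) (Set.Ici 0) :=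
    fun s hs t ht hst => mul_lt_mul_of_pos_left (hψmono hs ht hst) hlam
  have hfhatl : fhatl ∈ (LinearMap.ker (A : H1 →ₗ[ℝ] H2))ᗮ :=
    mem_orthogonal_ker_of_penalized_minimizer A R hpenalty_strictMono hfhatl_min
  refine ⟨⟨hghat_uniq _ ⟨fdag, rfl⟩ ?_, hfdag⟩, ⟨hghatl_uniq _ ⟨fhatl, rfl⟩ ?_, hfhatl⟩⟩
  · rintro _ ⟨f, rfl⟩
    exact hfdag_min f
  · exact map_minimizer_of_mem_orthogonal_ker (R := R) (Φ := fun t => lam * ψ t) hfhatl hfhatl_min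

/-- **Correspondence between empirical solutions of the discretized problems.**
Given samples `(x_i, y_i)`, `i = 1,…,n`, and the empirical functional
`R_{Z_n}(g) = (1/n) Σ_i V(y_i, g(x_i))` (with `V(y_i,·)` lsc, strictly convex, coercive), for
the minimizer `ĝ⁽ⁿ⁾_R` of `R_{Z_n}` over `H_K = Im(A)`, the minimum-norm minimizer
`(f̂⁽ⁿ⁾_R)†` of `f ↦ R_{Z_n}(Af)` over `H1`, and their Tikhonov-regularized versions
`ĝ⁽ⁿ⁾_{R,λ}`, `f̂⁽ⁿ⁾_{R,λ}` (penalties `λψ(‖·‖_{H_K})`, `λψ(‖·‖_{H1})`), one has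
`(f̂⁽ⁿ⁾_R)† = Ã⁻¹ ĝ⁽ⁿ⁾_R` and `f̂⁽ⁿ⁾_{R,λ} = Ã⁻¹ ĝ⁽ⁿ⁾_{R,λ}`. -/
theorem stmt3
    {H1 H2 X : Type*}
    [NormedAddCommGroup H1] [InnerProductSpace ℝ H1] [CompleteSpace H1]
    [TopologicalSpace.SeparableSpace H1]
    [NormedAddCommGroup H2] [InnerProductSpace ℝ H2] [CompleteSpace H2]
    -- `H2` is a space of functions on `X`, with evaluation `e`
    (e : H2 →ₗ[ℝ] X → ℝ) (he : Function.Injective e)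
    (A : H1 →L[ℝ] H2) (c : ℝ) (hc : 0 < c)
    (hbound : ∀ (x : X) (f : H1), |e (A f) x| ≤ c * ‖f‖)
    (φ : X → H1) (hφ : ∀ (x : X) (f : H1), e (A f) x = ⟪f, φ x⟫)
    -- the samples
    (n : ℕ) (hn : 0 < n) (x : Fin n → X) (yv : Fin n → ℝ)
    -- the loss function
    (V : ℝ → ℝ → ℝ) (hVnonneg : ∀ a t, 0 ≤ V a t)
    (hVlsc : ∀ i : Fin n, LowerSemicontinuous (V (yv i)))
    (hVconv : ∀ i : Fin n, StrictConvexOn ℝ Set.univ (V (yv i)))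
    (hVcoer : ∀ i : Fin n, ∀ M : ℝ, ∃ r : ℝ, ∀ t : ℝ, r ≤ |t| → M ≤ V (yv i) t)
    -- the penalty
    (ψ : ℝ → ℝ)
    (hψcont : ContinuousOn ψ (Set.Ici 0))
    (hψconv : ConvexOn ℝ (Set.Ici 0) ψ)
    (hψmono : StrictMonoOn ψ (Set.Ici 0))
    (hψnonneg : ∀ t ∈ Set.Ici (0 : ℝ), 0 ≤ ψ t)
    (lam : ℝ) (hlam : 0 < lam)
    -- `ghat` minimizes the empirical risk over `H_K = Im(A)` (unique minimizer)
    (ghat : H2) (hghat_mem : ghat ∈ Set.range A)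
    (hghat_min : ∀ g ∈ Set.range A,
      (n : ℝ)⁻¹ * ∑ i, V (yv i) (e ghat (x i)) ≤ (n : ℝ)⁻¹ * ∑ i, V (yv i) (e g (x i)))
    (hghat_uniq : ∀ g ∈ Set.range A,
      (∀ g' ∈ Set.range A,
        (n : ℝ)⁻¹ * ∑ i, V (yv i) (e g (x i)) ≤ (n : ℝ)⁻¹ * ∑ i, V (yv i) (e g' (x i))) →
      g = ghat)
    -- `fdag` is the minimum-norm minimizer of the empirical risk composed with `A`
    (fdag : H1)
    (hfdag_min : ∀ f : H1,
      (n : ℝ)⁻¹ * ∑ i, V (yv i) (e (A fdag) (x i)) ≤ (n : ℝ)⁻¹ * ∑ i, V (yv i) (e (A f) (x i)))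
    (hfdag_norm : ∀ f : H1,
      (∀ f' : H1,
        (n : ℝ)⁻¹ * ∑ i, V (yv i) (e (A f) (x i))
          ≤ (n : ℝ)⁻¹ * ∑ i, V (yv i) (e (A f') (x i))) →
      ‖fdag‖ ≤ ‖f‖)
    -- `ghatl` is the unique minimizer of the penalized empirical risk over `H_K = Im(A)`
    (ghatl : H2) (hghatl_mem : ghatl ∈ Set.range A)
    (hghatl_min : ∀ g ∈ Set.range A,
      (n : ℝ)⁻¹ * ∑ i, V (yv i) (e ghatl (x i)) + lam * ψ (KNorm A ghatl)
        ≤ (n : ℝ)⁻¹ * ∑ i, V (yv i) (e g (x i)) + lam * ψ (KNorm A g))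
    (hghatl_uniq : ∀ g ∈ Set.range A,
      (∀ g' ∈ Set.range A,
        (n : ℝ)⁻¹ * ∑ i, V (yv i) (e g (x i)) + lam * ψ (KNorm A g)
          ≤ (n : ℝ)⁻¹ * ∑ i, V (yv i) (e g' (x i)) + lam * ψ (KNorm A g')) →
      g = ghatl)
    -- `fhatl` is the unique minimizer of the penalized empirical risk over `H1`
    (fhatl : H1)
    (hfhatl_min : ∀ f : H1,
      (n : ℝ)⁻¹ * ∑ i, V (yv i) (e (A fhatl) (x i)) + lam * ψ ‖fhatl‖
        ≤ (n : ℝ)⁻¹ * ∑ i, V (yv i) (e (A f) (x i)) + lam * ψ ‖f‖)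
    (hfhatl_uniq : ∀ f : H1,
      (∀ f' : H1,
        (n : ℝ)⁻¹ * ∑ i, V (yv i) (e (A f) (x i)) + lam * ψ ‖f‖
          ≤ (n : ℝ)⁻¹ * ∑ i, V (yv i) (e (A f') (x i)) + lam * ψ ‖f'‖) →
      f = fhatl) :
    (A fdag = ghat ∧ fdag ∈ (LinearMap.ker (A : H1 →ₗ[ℝ] H2))ᗮ) ∧
    (A fhatl = ghatl ∧ fhatl ∈ (LinearMap.ker (A : H1 →ₗ[ℝ] H2))ᗮ) :=
  stmt3_general e A n x yv V ψ hψmono lam hlam ghat hghat_uniq fdag hfdag_min hfdag_norm ghatl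
    hghatl_uniq fhatl hfhatl_min
end

section
/- Let V : 𝒴 × ℝ → [0,∞) be strictly convex and Lipschitz continuous in its second argument and coercive (V(Y, g_k(X)) → ∞ for all X, Y whenever ‖g_k‖_{H_K} → ∞), and let ĝ^{(n)}_R be the (unique) minimizer over the reproducing kernel Hilbert space H_K of the unpenalized empirical risk R_{Z_n}(g) = (1/n) Σ_{i=1}^n V(y_i, g(x_i)). Then ĝ^{(n)}_R admits the finite representation ĝ^{(n)}_R = Σ_{j=1}^n α_j K_{x_j} for some real coefficients α_j; i.e. ĝ^{(n)}_R lies in span{K_{x_1},…,K_{x_n}}. -/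
open RealInnerProductSpace

/-! Projecting `ĝ` orthogonally onto `span {K_{x_j}}` does not change the values `ĝ(x_j) = ⟪ĝ, K_{x_j}⟫`,
hence not the empirical risk, so the projection is again a minimizer; by uniqueness it is `ĝ`. -/

section Representer

variable {E ι β : Type*} [NormedAddCommGroup E] [InnerProductSpace ℝ E] [Finite ι]

theorem exists_mem_span_range_inner_eq (v : ι → E) (g : E) :
    ∃ p ∈ Submodule.span ℝ (Set.range v), ∀ i, ⟪p, v i⟫ = ⟪g, v i⟫ := by
  set S := Submodule.span ℝ (Set.range v)
  have : FiniteDimensional ℝ S := FiniteDimensional.span_of_finite ℝ (Set.finite_range v)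
  refine ⟨S.orthogonalProjectionOnto g, Submodule.coe_mem _, fun i => ?_⟩
  exact Submodule.inner_orthogonalProjectionOnto_eq_of_mem_right
    (⟨v i, Submodule.subset_span ⟨i, rfl⟩⟩ : S) g

theorem mem_span_range_of_unique_minimizer [Preorder β] (v : ι → E) (F : E → β)
    (hF : ∀ g g', (∀ i, ⟪g, v i⟫ = ⟪g', v i⟫) → F g = F g')
    {ghat : E} (hmin : ∀ g, F ghat ≤ F g)
    (huniq : ∀ g, (∀ g', F g ≤ F g') → g = ghat) :
    ghat ∈ Submodule.span ℝ (Set.range v) := by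
  obtain ⟨p, hp, hinner⟩ := exists_mem_span_range_inner_eq v ghat
  have hFp : F p = F ghat := hF p ghat hinner
  rwa [← huniq p fun g => hFp ▸ hmin g]

end Representer

theorem stmt10_general
    {H X : Type*}
    [NormedAddCommGroup H] [InnerProductSpace ℝ H]
    -- `H` is a RKHS of functions on `X`: evaluation `e` and kernel sections `Kx`
    (e : H →ₗ[ℝ] X → ℝ) (Kx : X → H)
    (hrepr : ∀ (g : H) (x : X), e g x = ⟪g, Kx x⟫)
    -- the samples
    (n : ℕ) (x : Fin n → X) (yv : Fin n → ℝ)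
    (V : ℝ → ℝ → ℝ)
    -- `ghat = ĝ⁽ⁿ⁾_R` is the (unique) minimizer of the empirical risk over `H_K = H`
    (ghat : H)
    (hghat_min : ∀ g : H,
      (n : ℝ)⁻¹ * ∑ i, V (yv i) (e ghat (x i)) ≤ (n : ℝ)⁻¹ * ∑ i, V (yv i) (e g (x i)))
    (hghat_uniq : ∀ g : H,
      (∀ g' : H,
        (n : ℝ)⁻¹ * ∑ i, V (yv i) (e g (x i)) ≤ (n : ℝ)⁻¹ * ∑ i, V (yv i) (e g' (x i))) →
      g = ghat) :
    ∃ α : Fin n → ℝ, ghat = ∑ j, α j • Kx (x j) := by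
  have hrisk : ∀ g g' : H, (∀ j, ⟪g, Kx (x j)⟫ = ⟪g', Kx (x j)⟫) →
      (n : ℝ)⁻¹ * ∑ i, V (yv i) (e g (x i)) = (n : ℝ)⁻¹ * ∑ i, V (yv i) (e g' (x i)) := by
    intro g g' h
    simp only [hrepr, h]
  obtain ⟨α, hα⟩ := (Submodule.mem_span_range_iff_exists_fun ℝ).1 <|
    mem_span_range_of_unique_minimizer (fun j => Kx (x j)) _ hrisk hghat_min hghat_uniq
  exact ⟨α, hα.symm⟩

/-- **Representer theorem for the unpenalized empirical minimizer.**
Let `H_K` be a RKHS on `X` with kernel sections `K_x`, and let `V` be strictly convex,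
Lipschitz in its second argument and coercive.  Then the (unique) minimizer `ĝ⁽ⁿ⁾_R` over
`H_K` of the unpenalized empirical risk `R_{Z_n}(g) = (1/n) Σ_i V(y_i, g(x_i))` admits the
finite representation `ĝ⁽ⁿ⁾_R = Σ_j α_j K_{x_j}`. -/
theorem stmt10
    {H X : Type*}
    [NormedAddCommGroup H] [InnerProductSpace ℝ H] [CompleteSpace H]
    -- `H` is a RKHS of functions on `X`: evaluation `e` and kernel sections `Kx`
    (e : H →ₗ[ℝ] X → ℝ) (Kx : X → H)
    (hrepr : ∀ (g : H) (x : X), e g x = ⟪g, Kx x⟫)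
    -- the samples
    (n : ℕ) (hn : 0 < n) (x : Fin n → X) (yv : Fin n → ℝ)
    -- the loss: nonnegative, strictly convex and Lipschitz in its second argument, coercive
    (V : ℝ → ℝ → ℝ) (hVnonneg : ∀ a t, 0 ≤ V a t)
    (hVconv : ∀ a : ℝ, StrictConvexOn ℝ Set.univ (V a))
    (σ : NNReal) (hVlip : ∀ a : ℝ, LipschitzWith σ (V a))
    (hVcoer : ∀ gk : ℕ → H, Filter.Tendsto (fun k => ‖gk k‖) Filter.atTop Filter.atTop →
      ∀ (Y : ℝ) (X' : X), Filter.Tendsto (fun k => V Y (e (gk k) X')) Filter.atTop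
        Filter.atTop)
    -- `ghat = ĝ⁽ⁿ⁾_R` is the (unique) minimizer of the empirical risk over `H_K = H`
    (ghat : H)
    (hghat_min : ∀ g : H,
      (n : ℝ)⁻¹ * ∑ i, V (yv i) (e ghat (x i)) ≤ (n : ℝ)⁻¹ * ∑ i, V (yv i) (e g (x i)))
    (hghat_uniq : ∀ g : H,
      (∀ g' : H,
        (n : ℝ)⁻¹ * ∑ i, V (yv i) (e g (x i)) ≤ (n : ℝ)⁻¹ * ∑ i, V (yv i) (e g' (x i))) →
      g = ghat) :
    ∃ α : Fin n → ℝ, ghat = ∑ j, α j • Kx (x j) :=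
  stmt10_general e Kx hrepr n x yv V ghat hghat_min hghat_uniq
end

section
/- Under the same hypotheses (V strictly convex, coercive and Lipschitz in the second argument), the minimum-norm minimizer (f̂^{(n)}_R)† over H1 of f ↦ (1/n) Σ_{i=1}^n V(y_i, (Af)(x_i)) admits the representation (f̂^{(n)}_R)† = Σ_{j=1}^n α_j φ_{x_j}, with the same coefficients α_j for which ĝ^{(n)}_R = Σ_{j=1}^n α_j K_{x_j}. -/
/-!
The empirical risk of `f ∈ H1` depends on `f` only through the values `(Af)(xᵢ) = ⟪f, φ_{xᵢ}⟫`,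
so it does not change when `f` is replaced by its orthogonal projection onto
`span {φ_{x₁}, …, φ_{xₙ}}`. Projecting the minimum-norm minimizer therefore gives a minimizer of
no larger norm, which by Pythagoras forces the minimizer into that span. Since `A f†` minimizes
the risk over `Im A`, it is `ĝ` by uniqueness, and applying `A` to the expansion of `f†` gives
that of `ĝ` with the same coefficients.
-/

open RealInnerProductSpace

open Submodule

section MinimumNorm

variable {E : Type*} [NormedAddCommGroup E] [InnerProductSpace ℝ E]

theorem Submodule.mem_of_norm_le_norm_starProjection (K : Submodule ℝ E)
    [K.HasOrthogonalProjection] {f : E} (h : ‖f‖ ≤ ‖K.starProjection f‖) : f ∈ K :=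
  (K.mem_iff_norm_starProjection f).2 <| le_antisymm (K.norm_starProjection_apply_le f) h

theorem Submodule.inner_starProjection_left_of_mem (K : Submodule ℝ E)
    [K.HasOrthogonalProjection] (f : E) {v : E} (hv : v ∈ K) :
    ⟪K.starProjection f, v⟫ = ⟪f, v⟫ := by
  rw [inner_starProjection_left_eq_right, K.starProjection_eq_self_iff.2 hv]

theorem mem_span_range_of_minNorm_minimizer {ι β : Type*} [Finite ι] [Preorder β]
    (v : ι → E) {R : E → β} (hR : ∀ f g : E, (∀ i, ⟪f, v i⟫ = ⟪g, v i⟫) → R f = R g)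
    {f₀ : E} (hmin : ∀ f, R f₀ ≤ R f) (hnorm : ∀ f, (∀ f', R f ≤ R f') → ‖f₀‖ ≤ ‖f‖) :
    f₀ ∈ span ℝ (Set.range v) := by
  set K := span ℝ (Set.range v)
  have : FiniteDimensional ℝ K := FiniteDimensional.span_of_finite ℝ (Set.finite_range v)
  refine K.mem_of_norm_le_norm_starProjection (hnorm _ fun f' => ?_)
  rw [hR _ f₀ fun i => K.inner_starProjection_left_of_mem f₀ (subset_span ⟨i, rfl⟩)]
  exact hmin f'

end MinimumNorm

theorem stmt11_general
    {H1 H2 X : Type*}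
    [NormedAddCommGroup H1] [InnerProductSpace ℝ H1]
    [NormedAddCommGroup H2] [InnerProductSpace ℝ H2]
    -- `H2` is a space of functions on `X`, with evaluation `e`
    (e : H2 →ₗ[ℝ] X → ℝ)
    (A : H1 →L[ℝ] H2)
    (φ : X → H1) (hφ : ∀ (x : X) (f : H1), e (A f) x = ⟪f, φ x⟫)
    -- the samples
    (n : ℕ) (x : Fin n → X) (yv : Fin n → ℝ)
    (V : ℝ → ℝ → ℝ)
    -- `ghat = ĝ⁽ⁿ⁾_R` is the (unique) minimizer of the empirical risk over `H_K = Im(A)`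
    (ghat : H2)
    (hghat_uniq : ∀ g ∈ Set.range A,
      (∀ g' ∈ Set.range A,
        (n : ℝ)⁻¹ * ∑ i, V (yv i) (e g (x i)) ≤ (n : ℝ)⁻¹ * ∑ i, V (yv i) (e g' (x i))) →
      g = ghat)
    -- `fdag = (f̂⁽ⁿ⁾_R)†` is the minimum-norm minimizer over `H1`
    (fdag : H1)
    (hfdag_min : ∀ f : H1,
      (n : ℝ)⁻¹ * ∑ i, V (yv i) (e (A fdag) (x i))
        ≤ (n : ℝ)⁻¹ * ∑ i, V (yv i) (e (A f) (x i)))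
    (hfdag_norm : ∀ f : H1,
      (∀ f' : H1,
        (n : ℝ)⁻¹ * ∑ i, V (yv i) (e (A f) (x i))
          ≤ (n : ℝ)⁻¹ * ∑ i, V (yv i) (e (A f') (x i))) →
      ‖fdag‖ ≤ ‖f‖) :
    ∃ α : Fin n → ℝ,
      fdag = ∑ j, α j • φ (x j) ∧ ghat = ∑ j, α j • A (φ (x j)) := by
  have hAf : A fdag = ghat :=
    hghat_uniq _ ⟨fdag, rfl⟩ fun _ ⟨f', hf'⟩ => hf' ▸ hfdag_min f'
  have hmem : fdag ∈ span ℝ (Set.range fun j => φ (x j)) :=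
    mem_span_range_of_minNorm_minimizer _
      (R := fun f => (n : ℝ)⁻¹ * ∑ i, V (yv i) (e (A f) (x i)))
      (fun f g h => by simp only [hφ, h]) hfdag_min hfdag_norm
  obtain ⟨α, hα⟩ := (mem_span_range_iff_exists_fun ℝ).1 hmem
  refine ⟨α, hα.symm, ?_⟩
  rw [← hAf, ← hα, map_sum]
  simp only [map_smul]

/-- **Representer theorem for the minimum-norm empirical solution of the inverse problem.**
With `V` strictly convex, coercive and Lipschitz in its second argument, the minimum-norm
minimizer `(f̂⁽ⁿ⁾_R)†` over `H1` of `f ↦ (1/n) Σ_i V(y_i, (Af)(x_i))` admits the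
representation `(f̂⁽ⁿ⁾_R)† = Σ_j α_j φ_{x_j}`, with the same coefficients `α_j` for which
`ĝ⁽ⁿ⁾_R = Σ_j α_j K_{x_j}` (where `K_{x_j} = A φ_{x_j}`). -/
theorem stmt11
    {H1 H2 X : Type*}
    [NormedAddCommGroup H1] [InnerProductSpace ℝ H1] [CompleteSpace H1]
    [TopologicalSpace.SeparableSpace H1]
    [NormedAddCommGroup H2] [InnerProductSpace ℝ H2] [CompleteSpace H2]
    -- `H2` is a space of functions on `X`, with evaluation `e`
    (e : H2 →ₗ[ℝ] X → ℝ) (he : Function.Injective e)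
    (A : H1 →L[ℝ] H2) (c : ℝ) (hc : 0 < c)
    (hbound : ∀ (x : X) (f : H1), |e (A f) x| ≤ c * ‖f‖)
    (φ : X → H1) (hφ : ∀ (x : X) (f : H1), e (A f) x = ⟪f, φ x⟫)
    -- the samples
    (n : ℕ) (hn : 0 < n) (x : Fin n → X) (yv : Fin n → ℝ)
    -- the loss: nonnegative, strictly convex and Lipschitz in its second argument, coercive
    (V : ℝ → ℝ → ℝ) (hVnonneg : ∀ a t, 0 ≤ V a t)
    (hVconv : ∀ a : ℝ, StrictConvexOn ℝ Set.univ (V a))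
    (σ : NNReal) (hVlip : ∀ a : ℝ, LipschitzWith σ (V a))
    (hVcoer : ∀ gk : ℕ → H2, (∀ k, gk k ∈ Set.range A) →
      Filter.Tendsto (fun k => KNorm A (gk k)) Filter.atTop Filter.atTop →
      ∀ (Y : ℝ) (X' : X), Filter.Tendsto (fun k => V Y (e (gk k) X')) Filter.atTop
        Filter.atTop)
    -- `ghat = ĝ⁽ⁿ⁾_R` is the (unique) minimizer of the empirical risk over `H_K = Im(A)`
    (ghat : H2) (hghat_mem : ghat ∈ Set.range A)
    (hghat_min : ∀ g ∈ Set.range A,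
      (n : ℝ)⁻¹ * ∑ i, V (yv i) (e ghat (x i)) ≤ (n : ℝ)⁻¹ * ∑ i, V (yv i) (e g (x i)))
    (hghat_uniq : ∀ g ∈ Set.range A,
      (∀ g' ∈ Set.range A,
        (n : ℝ)⁻¹ * ∑ i, V (yv i) (e g (x i)) ≤ (n : ℝ)⁻¹ * ∑ i, V (yv i) (e g' (x i))) →
      g = ghat)
    -- `fdag = (f̂⁽ⁿ⁾_R)†` is the minimum-norm minimizer over `H1`
    (fdag : H1)
    (hfdag_min : ∀ f : H1,
      (n : ℝ)⁻¹ * ∑ i, V (yv i) (e (A fdag) (x i))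
        ≤ (n : ℝ)⁻¹ * ∑ i, V (yv i) (e (A f) (x i)))
    (hfdag_norm : ∀ f : H1,
      (∀ f' : H1,
        (n : ℝ)⁻¹ * ∑ i, V (yv i) (e (A f) (x i))
          ≤ (n : ℝ)⁻¹ * ∑ i, V (yv i) (e (A f') (x i))) →
      ‖fdag‖ ≤ ‖f‖) :
    ∃ α : Fin n → ℝ,
      fdag = ∑ j, α j • φ (x j) ∧ ghat = ∑ j, α j • A (φ (x j)) :=
  stmt11_general e A φ hφ n x yv V ghat hghat_uniq fdag hfdag_min hfdag_norm
end

section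
/- Suppose ε(λ) ∈ Θ(λ^γ) as λ → 0, with γ ≥ 0. If λ_n ∈ Θ(n^{-p}) with p > 0, then δ̃(n) := Δ(n, λ_n) ∈ Θ(n^{-max(1/2, 1 − pγ)}) as n → ∞. If λ_δ ∈ Θ(δ^{p*}) with p* > 0, then ñ(δ) := ⌊N(δ, λ_δ)⌋ ∈ Θ(δ^{-min(2, p*γ + 1)}) as δ → 0. -/
/-!
Write `e = ε ∘ λ`. Since `λ → 0⁺` at rate `t^p` (with `t = 1/n`, resp. `t = δ`), `e ≍ t^{pγ}`.
For `0 < t ≤ 1` a sum of powers `t^a + t^b` is comparable to its dominant term `t^{min a b}`.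
In `Δ` the denominator `√(σ²t + e²) + e` is comparable to `√(σ²t) + e ≍ t^{1/2} + t^{pγ}`,
so `Δ ≍ t^{1 - min(1/2, pγ)}`; in `N` the denominator `δ² + 2δe` is comparable to
`δ² + δ^{pγ+1}`, so `N ≍ δ^{-min(2, pγ+1)}`, which tends to infinity, so the integer part
does not change the order.
-/

open Filter Topology Asymptotics

/-- `Δ(n,λ) = (σ²/n)/(√(σ²/n + ε(λ)²) + ε(λ))`. -/
noncomputable def Delta (σ : ℝ) (ε : ℝ → ℝ) (n : ℕ) (l : ℝ) : ℝ :=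
  (σ ^ 2 / n) / (Real.sqrt (σ ^ 2 / n + ε l ^ 2) + ε l)

/-- `N(δ,λ) = σ²/(δ² + 2δε(λ))`. -/
noncomputable def Nfun (σ : ℝ) (ε : ℝ → ℝ) (δ l : ℝ) : ℝ :=
  σ ^ 2 / (δ ^ 2 + 2 * δ * ε l)

section

variable {α : Type*} {l : Filter α}

namespace Asymptotics

lemma isBigO_add_of_nonneg {f₁ f₂ g₁ g₂ : α → ℝ} (h₁ : f₁ =O[l] g₁) (h₂ : f₂ =O[l] g₂)
    (hg₁ : 0 ≤ᶠ[l] g₁) (hg₂ : 0 ≤ᶠ[l] g₂) : (f₁ + f₂) =O[l] (g₁ + g₂) := by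
  have summand {u v : α → ℝ} (hu : 0 ≤ᶠ[l] u) (hv : 0 ≤ᶠ[l] v) : u =O[l] (u + v) :=
    IsBigO.of_bound 1 <| by
      filter_upwards [hu, hv] with x (hux : 0 ≤ u x) (hvx : 0 ≤ v x)
      simp only [Pi.add_apply, Real.norm_of_nonneg hux, Real.norm_of_nonneg (add_nonneg hux hvx)]
      linarith
  exact (h₁.trans (summand hg₁ hg₂)).add (h₂.trans (add_comm g₂ g₁ ▸ summand hg₂ hg₁))

lemma IsTheta.add_of_nonneg {f₁ f₂ g₁ g₂ : α → ℝ} (h₁ : f₁ =Θ[l] g₁) (h₂ : f₂ =Θ[l] g₂)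
    (hf₁ : 0 ≤ᶠ[l] f₁) (hf₂ : 0 ≤ᶠ[l] f₂) (hg₁ : 0 ≤ᶠ[l] g₁) (hg₂ : 0 ≤ᶠ[l] g₂) :
    (f₁ + f₂) =Θ[l] (g₁ + g₂) :=
  ⟨isBigO_add_of_nonneg h₁.1 h₂.1 hg₁ hg₂, isBigO_add_of_nonneg h₁.2 h₂.2 hf₁ hf₂⟩

lemma IsTheta.natCast_floor {f g : α → ℝ} (hfg : f =Θ[l] g) (hf : 0 ≤ᶠ[l] f)
    (hg : Tendsto g l atTop) : (fun x => (⌊f x⌋₊ : ℝ)) =Θ[l] g := by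
  have hf_norm : Tendsto (norm ∘ f) l atTop :=
    hfg.tendsto_norm_atTop_iff.2 (tendsto_norm_atTop_atTop.comp hg)
  have hf_top : Tendsto f l atTop :=
    hf_norm.congr' (hf.mono fun x hx => Real.norm_of_nonneg hx)
  exact (isEquivalent_nat_floor.comp_tendsto hf_top).isTheta.trans hfg

lemma isTheta_of_le_of_le_mul {f g : α → ℝ} (C : ℝ) (hg : 0 ≤ᶠ[l] g) (hlow : g ≤ᶠ[l] f)
    (hup : ∀ᶠ x in l, f x ≤ C * g x) : f =Θ[l] g := by
  refine ⟨IsBigO.of_bound C ?_, IsBigO.of_bound 1 ?_⟩ <;>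
    filter_upwards [hg, hlow, hup] with x (hgx : 0 ≤ g x) (hfx : g x ≤ f x) hCx <;>
    rw [Real.norm_of_nonneg hgx, Real.norm_of_nonneg (hgx.trans hfx)] <;>
    linarith

lemma rpow_add_rpow_isTheta_rpow_min {t : α → ℝ} (ht : ∀ᶠ x in l, t x ∈ Set.Ioc 0 1)
    (a b : ℝ) : (fun x => t x ^ a + t x ^ b) =Θ[l] fun x => t x ^ min a b := by
  wlog hab : a ≤ b generalizing a b
  · simpa only [add_comm, min_comm] using this b a (le_of_not_ge hab)
  rw [min_eq_left hab]
  refine isTheta_of_le_of_le_mul 2 ?_ ?_ ?_ <;>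
    filter_upwards [ht] with x ⟨htx, htx'⟩
  · exact Real.rpow_nonneg htx.le a
  · exact le_add_of_nonneg_right (Real.rpow_nonneg htx.le b)
  · linarith [Real.rpow_le_rpow_of_exponent_ge htx htx' hab]

lemma sqrt_add_sq_add_isTheta {u e : α → ℝ} (hu : 0 ≤ᶠ[l] u) (he : 0 ≤ᶠ[l] e) :
    (fun x => √(u x + e x ^ 2) + e x) =Θ[l] fun x => √(u x) + e x := by
  refine isTheta_of_le_of_le_mul 2 ?_ ?_ ?_ <;>
    filter_upwards [hu, he] with x (hux : 0 ≤ u x) (hex : 0 ≤ e x)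
  · positivity
  · have := Real.sqrt_le_sqrt (le_add_of_nonneg_right (sq_nonneg (e x)) : u x ≤ u x + e x ^ 2)
    linarith
  · have : √(u x + e x ^ 2) ≤ √(u x) + e x := by
      rw [Real.sqrt_le_iff]
      exact ⟨by positivity, by nlinarith [Real.sq_sqrt hux, Real.sqrt_nonneg (u x)]⟩
    linarith [Real.sqrt_nonneg (u x)]

end Asymptotics

lemma isTheta_comp_of_isTheta_rpow {ε : ℝ → ℝ} {lam t : α → ℝ} {γ p : ℝ}
    (hε : ε =Θ[𝓝[>] 0] fun y => y ^ γ) (ht : Tendsto t l (𝓝[>] 0)) (hp : 0 < p)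
    (hlam0 : ∀ᶠ x in l, 0 < lam x) (hlam : lam =Θ[l] fun x => t x ^ p) :
    (fun x => ε (lam x)) =Θ[l] fun x => t x ^ (p * γ) := by
  have ht0 : ∀ᶠ x in l, 0 < t x := ht.eventually eventually_mem_nhdsWithin
  have hlam_tendsto : Tendsto lam l (𝓝[>] 0) := tendsto_nhdsWithin_iff.2
    ⟨hlam.isBigO.trans_tendsto ((tendsto_nhdsWithin_iff.1 ht).1.rpow_const_nhds_zero hp), hlam0⟩
  have hcomp : (fun x => ε (lam x)) =Θ[l] fun x => lam x ^ γ :=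
    ⟨hε.1.comp_tendsto hlam_tendsto, hε.2.comp_tendsto hlam_tendsto⟩
  refine hcomp.trans <|
    (hlam.rpow (hlam0.mono fun _ h => h.le) (ht0.mono fun x h => (Real.rpow_pos_of_pos h p).le)
      ).trans_eventuallyEq ?_
  filter_upwards [ht0] with x hx using (Real.rpow_mul hx.le p γ).symm

lemma eventually_mem_Ioc_of_tendsto {t : α → ℝ} (ht : Tendsto t l (𝓝[>] 0)) :
    ∀ᶠ x in l, t x ∈ Set.Ioc 0 1 :=
  ht.eventually (Ioc_mem_nhdsGT one_pos)

lemma sq_mul_div_sqrt_isTheta_rpow {σ q : ℝ} (hσ : σ ≠ 0) {t e : α → ℝ}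
    (ht : Tendsto t l (𝓝[>] 0)) (he0 : 0 ≤ᶠ[l] e) (he : e =Θ[l] fun x => t x ^ q) :
    (fun x => σ ^ 2 * t x / (√(σ ^ 2 * t x + e x ^ 2) + e x))
      =Θ[l] fun x => t x ^ max (1 / 2) (1 - q) := by
  have ht1 := eventually_mem_Ioc_of_tendsto ht
  have ht0 : 0 ≤ᶠ[l] t := ht1.mono fun x hx => hx.1.le
  have hσt : 0 ≤ᶠ[l] fun x => σ ^ 2 * t x := ht0.mono fun x (hx : 0 ≤ t x) => by positivity
  have hnum : (fun x => σ ^ 2 * t x) =Θ[l] t :=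
    (isTheta_const_mul_left (pow_ne_zero 2 hσ)).2 (isTheta_refl t l)
  have hsqrt : (fun x => √(σ ^ 2 * t x)) =Θ[l] fun x => t x ^ (1 / 2 : ℝ) := by
    simpa only [Real.sqrt_eq_rpow] using hnum.sqrt hσt ht0
  have hden : (fun x => √(σ ^ 2 * t x + e x ^ 2) + e x) =Θ[l] fun x => t x ^ min (1 / 2) q := by
    refine (sqrt_add_sq_add_isTheta hσt he0).trans <|
      (hsqrt.add_of_nonneg he ?_ he0 ?_ ?_).trans (rpow_add_rpow_isTheta_rpow_min ht1 _ _) <;>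
      filter_upwards [ht0] with x (hx : 0 ≤ t x) <;>
      positivity
  refine (hnum.div hden).trans_eventuallyEq ?_
  have hexp : max (1 / 2) (1 - q) = 1 - min (1 / 2) q := by
    rw [← max_sub_sub_left]; norm_num
  filter_upwards [ht1] with x hx
  rw [hexp, Real.rpow_sub hx.1, Real.rpow_one]

lemma sq_div_sq_add_mul_isTheta_rpow {σ q : ℝ} (hσ : σ ≠ 0) {t e : α → ℝ}
    (ht : Tendsto t l (𝓝[>] 0)) (he0 : 0 ≤ᶠ[l] e) (he : e =Θ[l] fun x => t x ^ q) :
    (fun x => σ ^ 2 / (t x ^ 2 + 2 * t x * e x)) =Θ[l] fun x => t x ^ (-min 2 (q + 1)) := by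
  have ht1 := eventually_mem_Ioc_of_tendsto ht
  have ht0 : 0 ≤ᶠ[l] t := ht1.mono fun x hx => hx.1.le
  have hsq : (fun x => t x ^ 2) =Θ[l] fun x => t x ^ (2 : ℝ) := by
    simpa only [Real.rpow_two] using isTheta_refl _ l
  have hcross : (fun x => 2 * t x * e x) =Θ[l] fun x => t x ^ (q + 1) := by
    have h := (isTheta_const_mul_left two_ne_zero).2 ((isTheta_refl t l).mul he)
    simp only [← mul_assoc] at h
    refine h.trans_eventuallyEq ?_
    filter_upwards [ht1] with x hx
    rw [Real.rpow_add_one hx.1.ne', mul_comm]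
  have hden : (fun x => t x ^ 2 + 2 * t x * e x) =Θ[l] fun x => t x ^ min 2 (q + 1) := by
    refine (hsq.add_of_nonneg hcross ?_ ?_ ?_ ?_).trans
      (rpow_add_rpow_isTheta_rpow_min ht1 _ _) <;>
      filter_upwards [ht0, he0] with x (hx : 0 ≤ t x) (hex : 0 ≤ e x) <;>
      positivity
  refine ((isTheta_const_const (pow_ne_zero 2 hσ) one_ne_zero).div hden).trans_eventuallyEq ?_
  filter_upwards [ht1] with x hx
  rw [Real.rpow_neg hx.1.le, one_div]

end

/-- **Rates of the noise level/sample size correspondence.**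
Suppose `ε(λ) ∈ Θ(λ^γ)` as `λ → 0⁺`, with `γ ≥ 0`.  If `λ_n ∈ Θ(n^{-p})` with `p > 0`, then
`δ̃(n) = Δ(n, λ_n) ∈ Θ(n^{-max(1/2, 1 − pγ)})` as `n → ∞`.  If `λ_δ ∈ Θ(δ^{p*})` with
`p* > 0`, then `ñ(δ) = ⌊N(δ, λ_δ)⌋ ∈ Θ(δ^{-min(2, p*γ + 1)})` as `δ → 0⁺`. -/
theorem stmt14
    (σ : ℝ) (hσ : 0 < σ)
    (ε : ℝ → ℝ) (hεnonneg : ∀ l : ℝ, 0 < l → 0 ≤ ε l)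
    (γ : ℝ) (hγ : 0 ≤ γ)
    (hε : ε =Θ[𝓝[>] (0 : ℝ)] fun l => l ^ γ) :
    (∀ (lamn : ℕ → ℝ) (p : ℝ), 0 < p → (∀ n, 0 < lamn n) →
      (lamn =Θ[atTop] fun n : ℕ => (n : ℝ) ^ (-p)) →
      (fun n : ℕ => Delta σ ε n (lamn n))
        =Θ[atTop] fun n : ℕ => (n : ℝ) ^ (-(max (1 / 2) (1 - p * γ)))) ∧
    (∀ (lamd : ℝ → ℝ) (pstar : ℝ), 0 < pstar → (∀ δ : ℝ, 0 < δ → 0 < lamd δ) →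
      (lamd =Θ[𝓝[>] (0 : ℝ)] fun δ => δ ^ pstar) →
      (fun δ : ℝ => (⌊Nfun σ ε δ (lamd δ)⌋₊ : ℝ))
        =Θ[𝓝[>] (0 : ℝ)] fun δ => δ ^ (-(min 2 (pstar * γ + 1)))) := by
  refine ⟨fun lamn p hp hpos hlam => ?_, fun lamd pstar hps hpos hlam => ?_⟩
  · have ht : Tendsto (fun n : ℕ => (n : ℝ)⁻¹) atTop (𝓝[>] 0) :=
      tendsto_inv_atTop_nhdsGT_zero.comp tendsto_natCast_atTop_atTop
    have hinv_rpow (a : ℝ) (n : ℕ) : ((n : ℝ)⁻¹) ^ a = (n : ℝ) ^ (-a) := by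
      rw [Real.inv_rpow n.cast_nonneg, Real.rpow_neg n.cast_nonneg]
    have he := isTheta_comp_of_isTheta_rpow hε ht hp (Eventually.of_forall hpos)
      (by simpa only [hinv_rpow] using hlam)
    simpa only [Delta, div_eq_mul_inv, hinv_rpow] using sq_mul_div_sqrt_isTheta_rpow hσ.ne' ht
      (Eventually.of_forall fun n => hεnonneg _ (hpos n)) he
  · have hlam0 : ∀ᶠ δ in 𝓝[>] (0 : ℝ), 0 < lamd δ := eventually_mem_nhdsWithin.mono hpos
    have he := isTheta_comp_of_isTheta_rpow hε tendsto_id hps hlam0 hlam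
    have hN : (fun δ => Nfun σ ε δ (lamd δ)) =Θ[𝓝[>] 0] fun δ => δ ^ (-min 2 (pstar * γ + 1)) :=
      sq_div_sq_add_mul_isTheta_rpow hσ.ne' tendsto_id (hlam0.mono fun δ h => hεnonneg _ h) he
    refine hN.natCast_floor ?_ (tendsto_rpow_neg_nhdsGT_zero ?_)
    · filter_upwards [eventually_mem_nhdsWithin, hlam0] with δ (hδ : 0 < δ) hlδ
      have := hεnonneg _ hlδ
      unfold Nfun
      positivity
    · have := mul_nonneg hps.le hγ
      exact neg_neg_of_pos (lt_min two_pos (by linarith))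
end
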